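/- arXiv:1702.04883 — 5 statements merged into one kernel-verified Lean document; each statement's English description precedes it below -/
import Mathlib

section
/- Let (Ω, 𝒜, μ) be a probability space, (ℱ_t)_{t∈ℝ} a filtration of sub-σ-algebras of 𝒜, 0 < δ < T real numbers, and n a positive integer. Let a, x : ℝ × Ω → ℝⁿ be jointly measurable processes such that x is adapted (x(t,·) is strongly ℱ_t-measurable for every t), x(t,·) = 0 μ-a.s. for every t ∈ [−δ, 0), a(t,·) = 0 μ-a.s. for every t ∈ (T, T+δ], and ∫₀^{T+δ} E[|a(t)|²] dt < ∞, ∫_{−δ}^{T} E[|x(t)|²] dt < ∞. Then ∫₀^T E[⟨a(t), x(t−δ)⟩] dt = ∫₀^T E[⟨E[a(t+δ) | ℱ_t], x(t)⟩] dt. -/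
/-!
A shift of time by `δ` turns the left side into `∫_{-δ}^{T-δ} E⟪a(t+δ), x(t)⟫ dt`. Its part over
`[-δ, 0)` vanishes with `x`, and the part of the right side over `(T-δ, T]` vanishes with `a`. On
`[0, T-δ]`, for almost every `t` both sections are in `L²`, and as `x(t)` is `ℱ_t`-measurable,
`a(t+δ)` may be replaced by its conditional expectation given `ℱ_t`, which is the orthogonal
projection of `L²` onto the `ℱ_t`-measurable functions.
-/

open MeasureTheory
open scoped RealInnerProductSpace ENNReal

section SquareIntegrableSections

variable {α Ω E : Type*} [NormedAddCommGroup E] {mα : MeasurableSpace α} {mΩ : MeasurableSpace Ω}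
  {μ : Measure Ω}

theorem memLp_two_of_lintegral_nnnorm_sq_ne_top {f : Ω → E} (hf : AEStronglyMeasurable f μ)
    (h : ∫⁻ ω, (‖f ω‖₊ : ℝ≥0∞) ^ 2 ∂μ ≠ ⊤) : MemLp f 2 μ := by
  refine ⟨hf, (eLpNorm_lt_top_iff_lintegral_rpow_enorm_lt_top two_ne_zero
    ENNReal.ofNat_ne_top).2 ?_⟩
  simpa [enorm_eq_nnnorm, ENNReal.rpow_two] using h.lt_top

theorem ae_memLp_two_of_lintegral_lintegral_lt_top [SFinite μ] {ν : Measure α} {s : Set α}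
    {X : α × Ω → E} (hX : StronglyMeasurable X)
    (h : ∫⁻ t in s, ∫⁻ ω, (‖X (t, ω)‖₊ : ℝ≥0∞) ^ 2 ∂μ ∂ν < ⊤) :
    ∀ᵐ t ∂ν.restrict s, MemLp (fun ω => X (t, ω)) 2 μ := by
  have hmeas : Measurable fun t => ∫⁻ ω, (‖X (t, ω)‖₊ : ℝ≥0∞) ^ 2 ∂μ :=
    (hX.nnnorm.measurable.coe_nnreal_ennreal.pow_const 2).lintegral_prod_right'
  filter_upwards [ae_lt_top hmeas h.ne] with t ht
  exact memLp_two_of_lintegral_nnnorm_sq_ne_top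
    (hX.comp_measurable measurable_prodMk_left).aestronglyMeasurable ht.ne

end SquareIntegrableSections

theorem setIntegral_Icc_comp_add_right {E : Type*} [NormedAddCommGroup E] [NormedSpace ℝ E]
    (f : ℝ → E) (a b c : ℝ) :
    ∫ t in Set.Icc a b, f (t + c) = ∫ t in Set.Icc (a + c) (b + c), f t := by
  have := (measurePreserving_add_right volume c).setIntegral_preimage_emb
    (measurableEmbedding_addRight c) f (Set.Icc (a + c) (b + c))
  simpa [Set.preimage_add_const_Icc] using this

theorem ae_restrict_Icc_comp_add_right {p : ℝ → Prop} {a b c : ℝ}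
    (h : ∀ᵐ s ∂volume.restrict (Set.Icc (a + c) (b + c)), p s) :
    ∀ᵐ t ∂volume.restrict (Set.Icc a b), p (t + c) := by
  have hmp := (measurePreserving_add_right volume c).restrict_preimage_emb
    (measurableEmbedding_addRight c) (Set.Icc (a + c) (b + c))
  simp only [Set.preimage_add_const_Icc, add_sub_cancel_right] at hmp
  exact hmp.quasiMeasurePreserving.ae h

section Duality

variable {Ω E 𝕜 : Type*} [RCLike 𝕜] [NormedAddCommGroup E] [NormedSpace ℝ E]
  [InnerProductSpace 𝕜 E] [CompleteSpace E] {m m0 : MeasurableSpace Ω} {μ : Measure Ω}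
  [IsFiniteMeasure μ]

theorem integral_inner_condExp_left (hm : m ≤ m0) {f g : Ω → E} (hf : MemLp f 2 μ)
    (hg : MemLp g 2 μ) (hgm : AEStronglyMeasurable[m] g μ) :
    ∫ ω, inner 𝕜 ((μ[f|m]) ω) (g ω) ∂μ = ∫ ω, inner 𝕜 (f ω) (g ω) ∂μ := by
  have hL2 := inner_condExpL2_eq_inner_fun (𝕜 := 𝕜) hm hf.toLp hg.toLp
    (hgm.congr hg.coeFn_toLp.symm)
  rw [L2.inner_def, L2.inner_def] at hL2
  calc ∫ ω, inner 𝕜 ((μ[f|m]) ω) (g ω) ∂μ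
      = ∫ ω, inner 𝕜 ((condExpL2 E 𝕜 hm hf.toLp : Ω →₂[μ] E) ω) (hg.toLp g ω) ∂μ := by
        refine integral_congr_ae ?_
        filter_upwards [hf.condExpL2_ae_eq_condExp (𝕜 := 𝕜) hm, hg.coeFn_toLp] with ω hf' hg'
        rw [hf', hg']
    _ = ∫ ω, inner 𝕜 (hf.toLp f ω) (hg.toLp g ω) ∂μ := hL2
    _ = ∫ ω, inner 𝕜 (f ω) (g ω) ∂μ := by
        refine integral_congr_ae ?_
        filter_upwards [hf.coeFn_toLp, hg.coeFn_toLp] with ω hf' hg'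
        rw [hf', hg']

end Duality

theorem delayed_duality_cancellation_general {Ω : Type*} [m0 : MeasurableSpace Ω]
    (μ : Measure Ω) [IsProbabilityMeasure μ]
    (ℱ : ℝ → MeasurableSpace Ω) (hle : ∀ t, ℱ t ≤ m0)
    (δ T : ℝ) (hδ : 0 < δ) (n : ℕ)
    (a x : ℝ × Ω → EuclideanSpace ℝ (Fin n))
    (ha : Measurable a) (hx : Measurable x)
    (hadapted : ∀ t : ℝ, StronglyMeasurable[ℱ t] fun ω => x (t, ω))
    (hx0 : ∀ t ∈ Set.Ico (-δ) (0:ℝ), ∀ᵐ ω ∂μ, x (t, ω) = 0)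
    (ha0 : ∀ t ∈ Set.Ioc T (T + δ), ∀ᵐ ω ∂μ, a (t, ω) = 0)
    (hai : ∫⁻ t in Set.Icc (0:ℝ) (T + δ), ∫⁻ ω, (‖a (t, ω)‖₊ : ℝ≥0∞) ^ 2 ∂μ < ⊤)
    (hxi : ∫⁻ t in Set.Icc (-δ) T, ∫⁻ ω, (‖x (t, ω)‖₊ : ℝ≥0∞) ^ 2 ∂μ < ⊤) :
    ∫ t in Set.Icc (0:ℝ) T, ∫ ω, ⟪a (t, ω), x (t - δ, ω)⟫ ∂μ
      = ∫ t in Set.Icc (0:ℝ) T,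
          ∫ ω, ⟪(μ[fun ω => a (t + δ, ω) | ℱ t]) ω, x (t, ω)⟫ ∂μ := by
  set F := fun t => ∫ ω, ⟪a (t, ω), x (t - δ, ω)⟫ ∂μ
  set G := fun t => ∫ ω, ⟪(μ[fun ω => a (t + δ, ω) | ℱ t]) ω, x (t, ω)⟫ ∂μ
  have hF_zero : ∀ t ∈ Set.Icc (-δ) (T - δ) \ Set.Icc 0 (T - δ), F (t + δ) = 0 := by
    rintro t ⟨⟨hδt, htT⟩, ht⟩
    have ht0 : t < 0 := lt_of_not_ge fun h => ht ⟨h, htT⟩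
    refine integral_eq_zero_of_ae ?_
    filter_upwards [hx0 t ⟨hδt, ht0⟩] with ω hω
    simp [hω]
  have hG_zero : ∀ t ∈ Set.Icc 0 T \ Set.Icc 0 (T - δ), G t = 0 := by
    rintro t ⟨⟨h0t, htT⟩, ht⟩
    have hTt : T - δ < t := lt_of_not_ge fun h => ht ⟨h0t, h⟩
    have hcond : μ[fun ω => a (t + δ, ω) | ℱ t] =ᵐ[μ] 0 :=
      (condExp_congr_ae (ha0 (t + δ) ⟨by linarith, by linarith⟩)).trans
        (Filter.EventuallyEq.of_eq condExp_zero)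
    refine integral_eq_zero_of_ae ?_
    filter_upwards [hcond] with ω hω
    simp [hω]
  have hFG : ∀ᵐ t ∂volume.restrict (Set.Icc 0 (T - δ)), F (t + δ) = G t := by
    have ha2 : ∀ᵐ t ∂volume.restrict (Set.Icc 0 (T - δ)), MemLp (fun ω => a (t + δ, ω)) 2 μ :=
      ae_restrict_Icc_comp_add_right <| ae_restrict_of_ae_restrict_of_subset
        (Set.Icc_subset_Icc (by linarith) (by linarith))
        (ae_memLp_two_of_lintegral_lintegral_lt_top ha.stronglyMeasurable hai)
    have hx2 : ∀ᵐ t ∂volume.restrict (Set.Icc 0 (T - δ)), MemLp (fun ω => x (t, ω)) 2 μ :=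
      ae_restrict_of_ae_restrict_of_subset (Set.Icc_subset_Icc (by linarith) (by linarith))
        (ae_memLp_two_of_lintegral_lintegral_lt_top hx.stronglyMeasurable hxi)
    filter_upwards [ha2, hx2] with t hat hxt
    simpa [F, G] using
      (integral_inner_condExp_left (hle t) hat hxt (hadapted t).aestronglyMeasurable).symm
  calc ∫ t in Set.Icc 0 T, F t
      = ∫ t in Set.Icc (-δ) (T - δ), F (t + δ) := by
        rw [setIntegral_Icc_comp_add_right]; simp
    _ = ∫ t in Set.Icc 0 (T - δ), F (t + δ) :=
        setIntegral_eq_of_subset_of_forall_sdiff_eq_zero measurableSet_Icc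
          (Set.Icc_subset_Icc (by linarith) le_rfl) hF_zero
    _ = ∫ t in Set.Icc 0 (T - δ), G t := integral_congr_ae hFG
    _ = ∫ t in Set.Icc 0 T, G t :=
        (setIntegral_eq_of_subset_of_forall_sdiff_eq_zero measurableSet_Icc
          (Set.Icc_subset_Icc le_rfl (by linarith)) hG_zero).symm

/-- Cancellation of the delayed-state terms in the duality computation:
for an adapted process `x` vanishing on `[-δ, 0)` and a process `a` vanishing on
`(T, T+δ]`, the delayed pairing equals the pairing against the conditional
expectation of the shifted process. -/
theorem delayed_duality_cancellation {Ω : Type*} [m0 : MeasurableSpace Ω]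
    (μ : Measure Ω) [IsProbabilityMeasure μ]
    (ℱ : ℝ → MeasurableSpace Ω) (hmono : Monotone ℱ) (hle : ∀ t, ℱ t ≤ m0)
    (δ T : ℝ) (hδ : 0 < δ) (hδT : δ < T) (n : ℕ) (hn : 0 < n)
    (a x : ℝ × Ω → EuclideanSpace ℝ (Fin n))
    (ha : Measurable a) (hx : Measurable x)
    (hadapted : ∀ t : ℝ, StronglyMeasurable[ℱ t] fun ω => x (t, ω))
    (hx0 : ∀ t ∈ Set.Ico (-δ) (0:ℝ), ∀ᵐ ω ∂μ, x (t, ω) = 0)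
    (ha0 : ∀ t ∈ Set.Ioc T (T + δ), ∀ᵐ ω ∂μ, a (t, ω) = 0)
    (hai : ∫⁻ t in Set.Icc (0:ℝ) (T + δ), ∫⁻ ω, (‖a (t, ω)‖₊ : ℝ≥0∞) ^ 2 ∂μ < ⊤)
    (hxi : ∫⁻ t in Set.Icc (-δ) T, ∫⁻ ω, (‖x (t, ω)‖₊ : ℝ≥0∞) ^ 2 ∂μ < ⊤) :
    ∫ t in Set.Icc (0:ℝ) T, ∫ ω, ⟪a (t, ω), x (t - δ, ω)⟫ ∂μ
      = ∫ t in Set.Icc (0:ℝ) T,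
          ∫ ω, ⟪(μ[fun ω => a (t + δ, ω) | ℱ t]) ω, x (t, ω)⟫ ∂μ :=
  delayed_duality_cancellation_general (m0 := m0) μ ℱ hle δ T hδ n a x ha hx hadapted hx0 ha0 hai
    hxi
end

section
/- Let (Ω, 𝒜, μ) be a probability space, (ℱ_t)_{t∈ℝ} a filtration of sub-σ-algebras of 𝒜, 0 < δ < T real numbers, and m a positive integer. Let a, w : ℝ × Ω → ℝᵐ be jointly measurable processes such that a is adapted (a(t,·) is strongly ℱ_t-measurable for every t), a(t,·) = 0 μ-a.s. for every t ∈ [−δ, 0), w(t,·) = 0 μ-a.s. for every t ∈ (T, T+δ], and ∫_{−δ}^{T} E[|a(t)|²] dt < ∞, ∫₀^{T+δ} E[|w(t)|²] dt < ∞. Then ∫₀^T E[⟨a(t−δ), w(t)⟩] dt = ∫₀^T E[⟨a(t), E[w(t+δ) | ℱ_t]⟩] dt. -/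
/-!
With `F t = E⟨a(t), w(t + δ)⟩`, the substitution `t ↦ t - δ` turns the left side into
`∫_{-δ}^{T-δ} F`. Since `a` vanishes on `[-δ, 0)` and `w` on `(T, T + δ]`, `F` vanishes on
`[-δ, 0)` and on `(T - δ, T]`, so both this integral and `∫_0^T F` equal `∫_0^{T-δ} F`.
Finally, for a.e. `t` both slices are square integrable and `a(t)` is `ℱ_t`-measurable, so
pulling `a(t)` out of the conditional expectation gives `F t = E⟨a(t), E[w(t + δ) | ℱ_t]⟩`.
-/

open MeasureTheory Set
open scoped RealInnerProductSpace ENNReal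

namespace MeasureTheory

section

variable {Ω E : Type*} [NormedAddCommGroup E] [InnerProductSpace ℝ E]
  {m m0 : MeasurableSpace Ω} {μ : Measure Ω}

theorem integral_inner_condExp_of_stronglyMeasurable_left [CompleteSpace E] (hm : m ≤ m0)
    [SigmaFinite (μ.trim hm)] {f g : Ω → E} (hf : StronglyMeasurable[m] f)
    (hfg : Integrable (fun ω => ⟪f ω, g ω⟫) μ) (hg : Integrable g μ) :
    ∫ ω, ⟪f ω, (μ[g|m]) ω⟫ ∂μ = ∫ ω, ⟪f ω, g ω⟫ ∂μ := by
  calc ∫ ω, ⟪f ω, (μ[g|m]) ω⟫ ∂μ = ∫ ω, (μ[fun ω => ⟪f ω, g ω⟫|m]) ω ∂μ :=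
        integral_congr_ae
          (condExp_bilin_of_stronglyMeasurable_left (innerSL ℝ) hf hfg hg).symm
    _ = ∫ ω, ⟪f ω, g ω⟫ ∂μ := integral_condExp hm

theorem MemLp.integrable_inner {f g : Ω → E} (hf : MemLp f 2 μ) (hg : MemLp g 2 μ) :
    Integrable (fun ω => ⟪f ω, g ω⟫) μ :=
  memLp_one_iff_integrable.1 ((innerSL ℝ).memLp_of_bilin 1 hf hg)

end

theorem memLp_two_of_lintegral_nnnorm_sq_lt_top {Ω E : Type*} [NormedAddCommGroup E]
    {m0 : MeasurableSpace Ω} {μ : Measure Ω} {f : Ω → E}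
    (hf : AEStronglyMeasurable f μ) (h : ∫⁻ ω, (‖f ω‖₊ : ℝ≥0∞) ^ 2 ∂μ < ⊤) : MemLp f 2 μ := by
  refine ⟨hf, (eLpNorm_lt_top_iff_lintegral_rpow_enorm_lt_top two_ne_zero
    ENNReal.ofNat_ne_top).2 ?_⟩
  simpa [enorm_eq_nnnorm] using h

theorem setIntegral_Icc_comp_sub_right {E : Type*} [NormedAddCommGroup E] [NormedSpace ℝ E]
    (F : ℝ → E) (a b d : ℝ) :
    ∫ t in Icc a b, F (t - d) = ∫ t in Icc (a - d) (b - d), F t := by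
  rcases le_or_gt a b with hab | hba
  · rw [integral_Icc_eq_integral_Ioc, integral_Icc_eq_integral_Ioc,
      ← intervalIntegral.integral_of_le hab, ← intervalIntegral.integral_of_le (by linarith),
      intervalIntegral.integral_comp_sub_right]
  · simp [Icc_eq_empty hba.not_ge, Icc_eq_empty (by linarith : ¬a - d ≤ b - d)]

theorem setIntegral_Icc_eq_of_forall_Ico_eq_zero {E : Type*} [NormedAddCommGroup E]
    [NormedSpace ℝ E] {F : ℝ → E} {a b c : ℝ} (hab : a ≤ b) (hF : ∀ x ∈ Ico a b, F x = 0) :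
    ∫ x in Icc a c, F x = ∫ x in Icc b c, F x :=
  setIntegral_eq_of_subset_of_forall_sdiff_eq_zero measurableSet_Icc
    (Icc_subset_Icc_left hab) fun x ⟨hx, hxb⟩ =>
      hF x ⟨hx.1, lt_of_not_ge fun hbx => hxb ⟨hbx, hx.2⟩⟩

theorem setIntegral_Icc_eq_of_forall_Ioc_eq_zero {E : Type*} [NormedAddCommGroup E]
    [NormedSpace ℝ E] {F : ℝ → E} {a b c : ℝ} (hbc : b ≤ c) (hF : ∀ x ∈ Ioc b c, F x = 0) :
    ∫ x in Icc a c, F x = ∫ x in Icc a b, F x :=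
  setIntegral_eq_of_subset_of_forall_sdiff_eq_zero measurableSet_Icc
    (Icc_subset_Icc_right hbc) fun x ⟨hx, hxb⟩ =>
      hF x ⟨lt_of_not_ge fun hxb' => hxb ⟨hx.1, hxb'⟩, hx.2⟩

theorem ae_memLp_two_prodMk_left {α Ω E : Type*} [NormedAddCommGroup E] [MeasurableSpace E]
    [OpensMeasurableSpace E] [SecondCountableTopology E]
    {mα : MeasurableSpace α} {m0 : MeasurableSpace Ω} {ν : Measure α} {μ : Measure Ω} [SFinite μ]
    {f : α × Ω → E} (hf : Measurable f) {s : Set α} (hs : MeasurableSet s)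
    (h : ∫⁻ t in s, ∫⁻ ω, (‖f (t, ω)‖₊ : ℝ≥0∞) ^ 2 ∂μ ∂ν < ⊤) :
    ∀ᵐ t ∂ν, t ∈ s → MemLp (fun ω => f (t, ω)) 2 μ := by
  have hmeas : Measurable fun t => ∫⁻ ω, (‖f (t, ω)‖₊ : ℝ≥0∞) ^ 2 ∂μ :=
    (hf.nnnorm.coe_nnreal_ennreal.pow_const 2).lintegral_prod_right'
  filter_upwards [(ae_restrict_iff' hs).1 (ae_lt_top hmeas h.ne)] with t ht hts
  exact memLp_two_of_lintegral_nnnorm_sq_lt_top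
    (hf.comp measurable_prodMk_left).aestronglyMeasurable (ht hts)

end MeasureTheory

theorem anticipated_duality_cancellation_general {Ω : Type*} [m0 : MeasurableSpace Ω]
    (μ : Measure Ω) [IsProbabilityMeasure μ]
    (ℱ : ℝ → MeasurableSpace Ω) (hle : ∀ t, ℱ t ≤ m0)
    (δ T : ℝ) (hδ : 0 < δ) (m : ℕ)
    (a w : ℝ × Ω → EuclideanSpace ℝ (Fin m))
    (ha : Measurable a) (hw : Measurable w)
    (hadapted : ∀ t : ℝ, StronglyMeasurable[ℱ t] fun ω => a (t, ω))
    (ha0 : ∀ t ∈ Set.Ico (-δ) (0:ℝ), ∀ᵐ ω ∂μ, a (t, ω) = 0)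
    (hw0 : ∀ t ∈ Set.Ioc T (T + δ), ∀ᵐ ω ∂μ, w (t, ω) = 0)
    (hai : ∫⁻ t in Set.Icc (-δ) T, ∫⁻ ω, (‖a (t, ω)‖₊ : ℝ≥0∞) ^ 2 ∂μ < ⊤)
    (hwi : ∫⁻ t in Set.Icc (0:ℝ) (T + δ), ∫⁻ ω, (‖w (t, ω)‖₊ : ℝ≥0∞) ^ 2 ∂μ < ⊤) :
    ∫ t in Set.Icc (0:ℝ) T, ∫ ω, ⟪a (t - δ, ω), w (t, ω)⟫ ∂μ
      = ∫ t in Set.Icc (0:ℝ) T,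
          ∫ ω, ⟪a (t, ω), (μ[fun ω => w (t + δ, ω) | ℱ t]) ω⟫ ∂μ := by
  set F : ℝ → ℝ := fun t => ∫ ω, ⟪a (t, ω), w (t + δ, ω)⟫ ∂μ
  have hF_left : ∀ t ∈ Ico (-δ) 0, F t = 0 := fun t ht =>
    integral_eq_zero_of_ae <| (ha0 t ht).mono fun ω hω => by simp [hω]
  have hF_right : ∀ t ∈ Ioc (T - δ) T, F t = 0 := fun t ht =>
    integral_eq_zero_of_ae <| (hw0 (t + δ) ⟨by linarith [ht.1], by linarith [ht.2]⟩).mono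
      fun ω hω => by simp [hω]
  have ha_slice := ae_memLp_two_prodMk_left ha measurableSet_Icc hai
  have hw_slice := (measurePreserving_add_right volume δ).quasiMeasurePreserving.ae
    (ae_memLp_two_prodMk_left hw measurableSet_Icc hwi)
  calc ∫ t in Icc 0 T, ∫ ω, ⟪a (t - δ, ω), w (t, ω)⟫ ∂μ
      = ∫ t in Icc (-δ) (T - δ), F t := by
        simpa [F] using setIntegral_Icc_comp_sub_right F 0 T δ
    _ = ∫ t in Icc 0 (T - δ), F t :=
        setIntegral_Icc_eq_of_forall_Ico_eq_zero (by linarith) hF_left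
    _ = ∫ t in Icc 0 T, F t :=
        (setIntegral_Icc_eq_of_forall_Ioc_eq_zero (by linarith) hF_right).symm
    _ = _ := by
      refine setIntegral_congr_ae measurableSet_Icc ?_
      filter_upwards [ha_slice, hw_slice] with t hat hwt ht
      have ha_t := hat ⟨by linarith [ht.1], ht.2⟩
      have hw_t := hwt ⟨by linarith [ht.1], by linarith [ht.2]⟩
      exact (integral_inner_condExp_of_stronglyMeasurable_left (hle t) (hadapted t)
        (ha_t.integrable_inner hw_t) (hw_t.integrable one_le_two)).symm

/-- Cancellation of the anticipated-state terms in the duality computation: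
for an adapted process `a` vanishing on `[-δ, 0)` and a process `w` vanishing on
`(T, T+δ]`, the delayed pairing equals the pairing against the conditional
expectation of the shifted process. -/
theorem anticipated_duality_cancellation {Ω : Type*} [m0 : MeasurableSpace Ω]
    (μ : Measure Ω) [IsProbabilityMeasure μ]
    (ℱ : ℝ → MeasurableSpace Ω) (hmono : Monotone ℱ) (hle : ∀ t, ℱ t ≤ m0)
    (δ T : ℝ) (hδ : 0 < δ) (hδT : δ < T) (m : ℕ) (hm : 0 < m)
    (a w : ℝ × Ω → EuclideanSpace ℝ (Fin m))
    (ha : Measurable a) (hw : Measurable w)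
    (hadapted : ∀ t : ℝ, StronglyMeasurable[ℱ t] fun ω => a (t, ω))
    (ha0 : ∀ t ∈ Set.Ico (-δ) (0:ℝ), ∀ᵐ ω ∂μ, a (t, ω) = 0)
    (hw0 : ∀ t ∈ Set.Ioc T (T + δ), ∀ᵐ ω ∂μ, w (t, ω) = 0)
    (hai : ∫⁻ t in Set.Icc (-δ) T, ∫⁻ ω, (‖a (t, ω)‖₊ : ℝ≥0∞) ^ 2 ∂μ < ⊤)
    (hwi : ∫⁻ t in Set.Icc (0:ℝ) (T + δ), ∫⁻ ω, (‖w (t, ω)‖₊ : ℝ≥0∞) ^ 2 ∂μ < ⊤) :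
    ∫ t in Set.Icc (0:ℝ) T, ∫ ω, ⟪a (t - δ, ω), w (t, ω)⟫ ∂μ
      = ∫ t in Set.Icc (0:ℝ) T,
          ∫ ω, ⟪a (t, ω), (μ[fun ω => w (t + δ, ω) | ℱ t]) ω⟫ ∂μ :=
  anticipated_duality_cancellation_general (m0 := m0) μ ℱ hle δ T hδ m a w ha hw hadapted ha0 hw0
    hai hwi
end

section
/- Let (Ω, 𝒜, μ) be a probability space, 𝒢 ⊆ 𝒜 a sub-σ-algebra, k a positive integer, and U ⊆ ℝᵏ a nonempty convex set. Let h : Ω → ℝᵏ be Bochner integrable and let u : Ω → ℝᵏ be strongly 𝒢-measurable and essentially bounded with u(ω) ∈ U for μ-a.e. ω. Suppose that for every strongly 𝒢-measurable, essentially bounded w : Ω → ℝᵏ with w(ω) ∈ U for μ-a.e. ω one has E[⟨h, w − u⟩] ≤ 0. Then for every v ∈ U, the conditional expectation satisfies E[⟨h, v − u⟩ | 𝒢] ≤ 0 μ-a.e. -/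
open MeasureTheory
open scoped RealInnerProductSpace

/-- Localization step of the necessary maximum principle: from the integrated
variational inequality over all admissible `𝒢`-measurable `U`-valued
perturbations, one deduces the pointwise conditional variational inequality. -/
theorem conditional_variational_inequality {Ω : Type*} [m0 : MeasurableSpace Ω]
    (μ : Measure Ω) [IsProbabilityMeasure μ]
    (𝒢 : MeasurableSpace Ω) (h𝒢 : 𝒢 ≤ m0)
    (k : ℕ) (hk : 0 < k)
    (U : Set (EuclideanSpace ℝ (Fin k))) (hUne : U.Nonempty) (hUconv : Convex ℝ U)
    (h : Ω → EuclideanSpace ℝ (Fin k)) (hint : Integrable h μ)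
    (u : Ω → EuclideanSpace ℝ (Fin k)) (hu : StronglyMeasurable[𝒢] u)
    (hubd : ∃ C : ℝ, ∀ᵐ ω ∂μ, ‖u ω‖ ≤ C)
    (huU : ∀ᵐ ω ∂μ, u ω ∈ U)
    (hvar : ∀ w : Ω → EuclideanSpace ℝ (Fin k), StronglyMeasurable[𝒢] w →
      (∃ C : ℝ, ∀ᵐ ω ∂μ, ‖w ω‖ ≤ C) → (∀ᵐ ω ∂μ, w ω ∈ U) →
      ∫ ω, ⟪h ω, w ω - u ω⟫ ∂μ ≤ 0) :
    ∀ v ∈ U, ∀ᵐ ω ∂μ, (μ[fun ω => ⟪h ω, v - u ω⟫ | 𝒢]) ω ≤ 0 := by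
  classical
  letI : MeasurableSpace Ω := m0
  intro v hv
  obtain ⟨C, hC⟩ := hubd
  set f : Ω → ℝ := fun ω => ⟪h ω, v - u ω⟫ with hf_def
  -- integrability of f
  have hum : AEStronglyMeasurable u μ := (hu.mono h𝒢).aestronglyMeasurable
  have hf_meas : AEStronglyMeasurable f μ :=
    AEStronglyMeasurable.inner hint.aestronglyMeasurable
      (aestronglyMeasurable_const.sub hum)
  have hf_int : Integrable f μ := by
    refine Integrable.mono' (hint.norm.mul_const (‖v‖ + C)) hf_meas ?_
    filter_upwards [hC] with ω hω
    calc ‖f ω‖ ≤ ‖h ω‖ * ‖v - u ω‖ := by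
          simpa using abs_real_inner_le_norm (h ω) (v - u ω)
      _ ≤ ‖h ω‖ * (‖v‖ + C) := by
          apply mul_le_mul_of_nonneg_left _ (norm_nonneg _)
          exact (norm_sub_le _ _).trans (by linarith)
  -- integrated inequality on 𝒢-measurable sets
  have hset : ∀ A : Set Ω, MeasurableSet[𝒢] A → ∫ ω in A, f ω ∂μ ≤ 0 := by
    intro A hA
    set w : Ω → EuclideanSpace ℝ (Fin k) := A.piecewise (fun _ => v) u with hw_def
    have hwmem : ∀ ω ∈ A, w ω = v := fun ω hω => Set.piecewise_eq_of_mem A _ _ hω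
    have hwnmem : ∀ ω ∉ A, w ω = u ω := fun ω hω => Set.piecewise_eq_of_notMem A _ _ hω
    have hwm : StronglyMeasurable[𝒢] w :=
      StronglyMeasurable.piecewise hA stronglyMeasurable_const hu
    have hwbd : ∃ D : ℝ, ∀ᵐ ω ∂μ, ‖w ω‖ ≤ D := by
      refine ⟨max ‖v‖ C, ?_⟩
      filter_upwards [hC] with ω hω
      by_cases hωA : ω ∈ A
      · rw [hwmem ω hωA]; exact le_max_left _ _
      · rw [hwnmem ω hωA]; exact hω.trans (le_max_right _ _)
    have hwU : ∀ᵐ ω ∂μ, w ω ∈ U := by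
      filter_upwards [huU] with ω hω
      by_cases hωA : ω ∈ A
      · rw [hwmem ω hωA]; exact hv
      · rw [hwnmem ω hωA]; exact hω
    have key := hvar w hwm hwbd hwU
    have heq : (fun ω => ⟪h ω, w ω - u ω⟫) = A.indicator f := by
      funext ω
      by_cases hωA : ω ∈ A
      · rw [Set.indicator_of_mem hωA, hwmem ω hωA]
      · rw [Set.indicator_of_notMem hωA, hwnmem ω hωA, sub_self, inner_zero_right]
    rw [heq] at key
    have hAm0 : MeasurableSet[m0] A := h𝒢 A hA
    calc ∫ ω in A, f ω ∂μ = ∫ ω, A.indicator f ω ∂μ := (integral_indicator hAm0).symm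
      _ ≤ 0 := key
  -- conclude pointwise via the conditional expectation
  set g : Ω → ℝ := μ[f|𝒢] with hg_def
  have hg_meas : StronglyMeasurable[𝒢] g := stronglyMeasurable_condExp
  have hA𝒢 : MeasurableSet[𝒢] {ω | 0 < g ω} :=
    hg_meas.measurable measurableSet_Ioi
  have hAm0 : MeasurableSet[m0] {ω | 0 < g ω} := h𝒢 _ hA𝒢
  have hgA : ∫ ω in {ω | 0 < g ω}, g ω ∂μ ≤ 0 := by
    rw [hg_def, setIntegral_condExp h𝒢 hf_int hA𝒢]
    exact hset _ hA𝒢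
  have hμA : μ {ω | 0 < g ω} = 0 := by
    by_contra hne
    have hpos : 0 < μ {ω | 0 < g ω} := pos_iff_ne_zero.mpr hne
    have hnonneg : 0 ≤ᵐ[μ.restrict {ω | 0 < g ω}] g := by
      refine (ae_restrict_iff' hAm0).mpr ?_
      filter_upwards with ω hω
      exact le_of_lt hω
    have hio : IntegrableOn g {ω | 0 < g ω} μ := integrable_condExp.integrableOn
    have hsupp : 0 < μ (Function.support g ∩ {ω | 0 < g ω}) := by
      refine lt_of_lt_of_le hpos (measure_mono ?_)
      intro ω hω
      exact ⟨ne_of_gt hω, hω⟩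
    have := (setIntegral_pos_iff_support_of_nonneg_ae hnonneg hio).mpr hsupp
    exact absurd hgA (not_le.mpr this)
  rw [ae_iff]
  simpa [not_le] using hμA
end

section
/- Let (Ω, 𝒜, μ) be a probability space, 𝒢 ⊆ 𝒜 a sub-σ-algebra, k a positive integer, and U ⊆ ℝᵏ a convex set. Let h : Ω → ℝᵏ be Bochner integrable and let u : Ω → ℝᵏ be strongly 𝒢-measurable and essentially bounded with u(ω) belonging to the interior of U for μ-a.e. ω. If for every v ∈ U one has E[⟨h, v − u⟩ | 𝒢] ≤ 0 μ-a.e., then E[h | 𝒢] = 0 μ-a.e.; in particular E[⟨h, v − u⟩ | 𝒢] = 0 μ-a.e. for every v ∈ U. -/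
/-!
Since `u` is `𝒢`-measurable and bounded, it can be pulled out of the conditional expectation:
`E[⟨h, v - u⟩ | 𝒢] = ⟨E[h | 𝒢], v - u⟩` a.e. Testing the inequality against a countable dense
subset of `U` gives, for a.e. `ω` simultaneously, `⟨E[h | 𝒢](ω), v - u(ω)⟩ ≤ 0` for all `v ∈ U`.
As `u(ω)` is interior, `v = u(ω) + t E[h | 𝒢](ω)` is admissible for small `t > 0`, which forces
`E[h | 𝒢](ω) = 0`.
-/

open MeasureTheory Filter Topology
open scoped RealInnerProductSpace

theorem ae_ball_of_isClosed {α X : Type*} {mα : MeasurableSpace α} {μ : Measure α}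
    [TopologicalSpace X] [TopologicalSpace.PseudoMetrizableSpace X]
    [TopologicalSpace.SeparableSpace X] {p : α → X → Prop} (hp : ∀ a, IsClosed {x | p a x})
    {s : Set X} (h : ∀ x ∈ s, ∀ᵐ a ∂μ, p a x) : ∀ᵐ a ∂μ, ∀ x ∈ s, p a x := by
  obtain ⟨t, hts, htc, hst⟩ :=
    (TopologicalSpace.IsSeparable.of_separableSpace s).exists_countable_dense_subset
  filter_upwards [(ae_ball_iff htc).2 fun x hx => h x (hts hx)] with a ha x hx
  exact (hp a).closure_subset_iff.2 ha (hst hx)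

theorem eq_zero_of_inner_sub_nonpos_of_mem_interior {E : Type*} [NormedAddCommGroup E]
    [InnerProductSpace ℝ E] {s : Set E} {x g : E} (hx : x ∈ interior s)
    (h : ∀ v ∈ s, ⟪g, v - x⟫ ≤ 0) : g = 0 := by
  have hnhds : ∀ᶠ t : ℝ in 𝓝 0, x + t • g ∈ s :=
    (Continuous.tendsto' (by fun_prop) 0 x (by simp)).eventually (mem_interior_iff_mem_nhds.1 hx)
  obtain ⟨t, hts, ht⟩ := (hnhds.filter_mono nhdsWithin_le_nhds).and self_mem_nhdsWithin |>.exists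
    (f := 𝓝[>] (0 : ℝ))
  have : t * ‖g‖ ^ 2 ≤ 0 := by
    simpa [real_inner_smul_right, real_inner_self_eq_norm_sq] using h _ hts
  exact norm_eq_zero.1 (pow_eq_zero_iff two_ne_zero |>.1
    (le_antisymm (nonpos_of_mul_nonpos_right this ht) (sq_nonneg _)))

theorem condExp_inner_of_stronglyMeasurable_right {Ω E : Type*} {m m0 : MeasurableSpace Ω}
    {μ : Measure Ω} [NormedAddCommGroup E] [InnerProductSpace ℝ E] [CompleteSpace E]
    (hm : m ≤ m0) {f w : Ω → E} (hf : Integrable f μ) (hw : StronglyMeasurable[m] w) {C : ℝ}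
    (hC : ∀ᵐ ω ∂μ, ‖w ω‖ ≤ C) :
    μ[fun ω => ⟪f ω, w ω⟫|m] =ᵐ[μ] fun ω => ⟪μ[f|m] ω, w ω⟫ :=
  condExp_bilin_of_stronglyMeasurable_right (innerSL ℝ) hw
    ((innerSL ℝ).integrable_of_bilin_of_bdd_right C hf (hw.mono hm).aestronglyMeasurable hC) hf

theorem conditional_variational_equality_general {Ω : Type*} [m0 : MeasurableSpace Ω]
    (μ : Measure Ω)
    (𝒢 : MeasurableSpace Ω) (h𝒢 : 𝒢 ≤ m0)
    (k : ℕ)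
    (U : Set (EuclideanSpace ℝ (Fin k)))
    (h : Ω → EuclideanSpace ℝ (Fin k)) (hint : Integrable h μ)
    (u : Ω → EuclideanSpace ℝ (Fin k)) (hu : StronglyMeasurable[𝒢] u)
    (hubd : ∃ C : ℝ, ∀ᵐ ω ∂μ, ‖u ω‖ ≤ C)
    (huU : ∀ᵐ ω ∂μ, u ω ∈ interior U)
    (hvar : ∀ v ∈ U, ∀ᵐ ω ∂μ, (μ[fun ω => ⟪h ω, v - u ω⟫ | 𝒢]) ω ≤ 0) :
    (μ[h | 𝒢] =ᵐ[μ] 0) ∧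
      ∀ v ∈ U, (fun ω => (μ[fun ω => ⟪h ω, v - u ω⟫ | 𝒢]) ω) =ᵐ[μ] 0 := by
  obtain ⟨C, hC⟩ := hubd
  have pull_out (v : EuclideanSpace ℝ (Fin k)) :
      μ[fun ω => ⟪h ω, v - u ω⟫|𝒢] =ᵐ[μ] fun ω => ⟪μ[h|𝒢] ω, v - u ω⟫ := by
    refine condExp_inner_of_stronglyMeasurable_right h𝒢 hint
      (stronglyMeasurable_const.sub hu) (C := ‖v‖ + C) ?_
    filter_upwards [hC] with ω hω
    exact (norm_sub_le _ _).trans (by linarith)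
  have hineq : ∀ᵐ ω ∂μ, ∀ v ∈ U, ⟪μ[h|𝒢] ω, v - u ω⟫ ≤ 0 := by
    refine ae_ball_of_isClosed (fun ω => isClosed_le (by fun_prop) continuous_const)
      fun v hv => ?_
    filter_upwards [hvar v hv, pull_out v] with ω hω hpull
    rwa [hpull] at hω
  have hzero : μ[h|𝒢] =ᵐ[μ] 0 := by
    filter_upwards [hineq, huU] with ω hω huω
    exact eq_zero_of_inner_sub_nonpos_of_mem_interior huω hω
  refine ⟨hzero, fun v _ => ?_⟩
  filter_upwards [pull_out v, hzero] with ω hpull hω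
  simp [hpull, hω]

/-- Remark 1 of the paper: when the equilibrium control takes values in the
interior of the control set, the conditional variational inequalities of the
necessary maximum principle become equalities. -/
theorem conditional_variational_equality {Ω : Type*} [m0 : MeasurableSpace Ω]
    (μ : Measure Ω) [IsProbabilityMeasure μ]
    (𝒢 : MeasurableSpace Ω) (h𝒢 : 𝒢 ≤ m0)
    (k : ℕ) (hk : 0 < k)
    (U : Set (EuclideanSpace ℝ (Fin k))) (hUconv : Convex ℝ U)
    (h : Ω → EuclideanSpace ℝ (Fin k)) (hint : Integrable h μ)
    (u : Ω → EuclideanSpace ℝ (Fin k)) (hu : StronglyMeasurable[𝒢] u)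
    (hubd : ∃ C : ℝ, ∀ᵐ ω ∂μ, ‖u ω‖ ≤ C)
    (huU : ∀ᵐ ω ∂μ, u ω ∈ interior U)
    (hvar : ∀ v ∈ U, ∀ᵐ ω ∂μ, (μ[fun ω => ⟪h ω, v - u ω⟫ | 𝒢]) ω ≤ 0) :
    (μ[h | 𝒢] =ᵐ[μ] 0) ∧
      ∀ v ∈ U, (fun ω => (μ[fun ω => ⟪h ω, v - u ω⟫ | 𝒢]) ω) =ᵐ[μ] 0 :=
  conditional_variational_equality_general (m0 := m0) μ 𝒢 h𝒢 k U h hint u hu hubd huU hvar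
end

section
/- Let (Ω, 𝒜, μ) be a probability space, t₀ ≤ S real numbers, and (𝒢_t)_{t∈[t₀,S]} a filtration of sub-σ-algebras of 𝒜. Let M : [t₀,S] × Ω → ℝ be a jointly measurable adapted process that is a martingale, i.e. M(t,·) is integrable and E[M(s,·) | 𝒢_t] = M(t,·) μ-a.e. whenever t₀ ≤ t ≤ s ≤ S, and assume ∫_{t₀}^S E[|M(s,·)|] ds < ∞. Let β : [t₀,S] → ℝ be integrable and define q(t,ω) := exp(∫_t^S β(s) ds)·M(t,ω). Then for every t ∈ [t₀,S], q(t,·) = E[ M(S,·) + ∫_t^S β(s)·q(s,·) ds | 𝒢_t ] μ-a.e. -/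
open MeasureTheory Set Filter
open scoped NNReal ENNReal

/-! For `A ∈ 𝒢 t` the martingale property makes `∫_A M(s)` independent of `s ∈ [t, S]`, so after
Fubini both sides integrate over `A` to multiples of `∫_A M(S)`. The multipliers agree by the
identity `∫_t^S β(s) e^{∫_s^S β} ds = e^{∫_t^S β} - 1`, the fundamental theorem of calculus for the
absolutely continuous function `s ↦ -e^{∫_s^S β}`. Fubini applies because `β` is integrable and
`E|M(s)| ≤ E|M(S)|` for the martingale `M`. -/

theorem LipschitzOnWith.comp_absolutelyContinuousOnInterval {X Y : Type*}
    [PseudoMetricSpace X] [PseudoMetricSpace Y] {g : X → Y} {K : ℝ≥0} {s : Set X}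
    {f : ℝ → X} {a b : ℝ} (hg : LipschitzOnWith K g s)
    (hf : AbsolutelyContinuousOnInterval f a b) (hfs : MapsTo f (uIcc a b) s) :
    AbsolutelyContinuousOnInterval (g ∘ f) a b := by
  unfold AbsolutelyContinuousOnInterval at hf ⊢
  refine squeeze_zero' (Eventually.of_forall fun _ => Finset.sum_nonneg fun _ _ => dist_nonneg)
    ?_ (by simpa using hf.const_mul (K : ℝ))
  rw [eventually_inf_principal]
  filter_upwards with E hE
  rw [Finset.mul_sum]
  gcongr with i hi
  exact hg.dist_le_mul _ (hfs (hE.1 i hi).1) _ (hfs (hE.1 i hi).2)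

theorem AbsolutelyContinuousOnInterval.exp {f : ℝ → ℝ} {a b : ℝ}
    (hf : AbsolutelyContinuousOnInterval f a b) :
    AbsolutelyContinuousOnInterval (fun x => Real.exp (f x)) a b := by
  obtain ⟨R, hR⟩ := isCompact_uIcc.exists_bound_of_continuousOn hf.continuousOn
  obtain ⟨K, hK⟩ := Real.contDiff_exp.contDiffOn.exists_lipschitzOnWith one_ne_zero
    (convex_Icc (-R) R) isCompact_Icc
  exact hK.comp_absolutelyContinuousOnInterval hf fun x hx => abs_le.1 (hR x hx)

theorem intervalIntegral_mul_exp_intervalIntegral {β : ℝ → ℝ} {t S : ℝ}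
    (hβ : IntervalIntegrable β volume t S) :
    ∫ s in t..S, β s * Real.exp (∫ u in s..S, β u) = Real.exp (∫ u in t..S, β u) - 1 := by
  set H : ℝ → ℝ := fun x => ∫ u in S..x, β u
  have hS : S ∈ uIcc t S := right_mem_uIcc
  have hE : AbsolutelyContinuousOnInterval (fun x => -Real.exp (-H x)) t S :=
    (hβ.absolutelyContinuousOnInterval_intervalIntegral hS).neg.exp.neg
  have hderiv : ∀ᵐ x, x ∈ uIoc t S →
      deriv (fun x => -Real.exp (-H x)) x = β x * Real.exp (∫ u in x..S, β u) := by
    filter_upwards [hβ.ae_hasDerivAt_integral] with x hx hxI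
    have h : HasDerivAt (fun x => -Real.exp (-H x)) (-(Real.exp (-H x) * -β x)) x :=
      (hx (uIoc_subset_uIcc hxI) S hS).neg.exp.neg
    rw [h.deriv, intervalIntegral.integral_symm]
    ring
  rw [← intervalIntegral.integral_congr_ae hderiv, hE.integral_deriv_eq_sub]
  simp only [H, intervalIntegral.integral_same, intervalIntegral.integral_symm t S, neg_zero,
    neg_neg, Real.exp_zero]
  ring

theorem setIntegral_Icc_eq_intervalIntegral {E : Type*} [NormedAddCommGroup E]
    [NormedSpace ℝ E] {μ : Measure ℝ} [NullSingletonClass μ] {f : ℝ → E} {a b : ℝ} (hab : a ≤ b) :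
    ∫ x in Icc a b, f x ∂μ = ∫ x in a..b, f x ∂μ := by
  rw [integral_Icc_eq_integral_Ioc, intervalIntegral.integral_of_le hab]

theorem setIntegral_Icc_mul_exp_setIntegral_Icc {β : ℝ → ℝ} {t S : ℝ}
    (hβ : IntegrableOn β (Icc t S)) (htS : t ≤ S) :
    ∫ s in Icc t S, β s * Real.exp (∫ u in Icc s S, β u) = Real.exp (∫ u in Icc t S, β u) - 1 := by
  rw [setIntegral_congr_fun measurableSet_Icc fun s hs => by
      rw [setIntegral_Icc_eq_intervalIntegral hs.2],
    setIntegral_Icc_eq_intervalIntegral htS, setIntegral_Icc_eq_intervalIntegral htS,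
    intervalIntegral_mul_exp_intervalIntegral
      ((intervalIntegrable_iff_integrableOn_Icc_of_le htS).2 hβ)]

theorem integrableOn_mul_exp_setIntegral_Icc {β : ℝ → ℝ} {t S : ℝ}
    (hβ : IntegrableOn β (Icc t S)) (htS : t ≤ S) :
    IntegrableOn (fun s => β s * Real.exp (∫ u in Icc s S, β u)) (Icc t S) := by
  have hΦ : ContinuousOn (fun s => ∫ u in s..S, β u) (uIcc t S) :=
    intervalIntegral.continuousOn_primitive_interval_left (by rwa [uIcc_of_le htS])
  have h := ((intervalIntegrable_iff_integrableOn_Icc_of_le htS).2 hβ).mul_continuousOn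
    (Real.continuous_exp.comp_continuousOn hΦ)
  refine ((intervalIntegrable_iff_integrableOn_Icc_of_le htS).1 h).congr_fun
    (fun s hs => ?_) measurableSet_Icc
  simp only [Function.comp_apply, setIntegral_Icc_eq_intervalIntegral hs.2]

section Product

variable {α Ω : Type*} [MeasurableSpace α] [MeasurableSpace Ω] {ν : Measure α} {μ : Measure Ω}
  [SFinite μ] {w : α → ℝ} {X : α × Ω → ℝ}

theorem integrable_prod_mul_of_integral_norm_le (hw : Integrable w ν)
    (hX : AEStronglyMeasurable X (ν.prod μ)) (hXint : ∀ᵐ s ∂ν, Integrable (fun ω => X (s, ω)) μ)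
    {D : ℝ} (hD : ∀ᵐ s ∂ν, ∫ ω, ‖X (s, ω)‖ ∂μ ≤ D) :
    Integrable (fun p => w p.1 * X p) (ν.prod μ) := by
  have hmeas : AEStronglyMeasurable (fun p => w p.1 * X p) (ν.prod μ) := hw.1.comp_fst.mul hX
  refine (integrable_prod_iff hmeas).2 ⟨?_, ?_⟩
  · filter_upwards [hXint] with s hs using hs.const_mul (w s)
  · refine (hw.norm.const_mul D).mono' hmeas.norm.integral_prod_right' ?_
    filter_upwards [hD] with s hs
    rw [Real.norm_of_nonneg (integral_nonneg fun _ => norm_nonneg _)]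
    simp only [norm_mul, integral_const_mul]
    rw [mul_comm D]
    exact mul_le_mul_of_nonneg_left hs (norm_nonneg _)

theorem setIntegral_integral_mul_of_setIntegral_eq [SFinite ν]
    (hF : Integrable (fun p => w p.1 * X p) (ν.prod μ)) {A : Set Ω} {c : ℝ}
    (hc : ∀ᵐ s ∂ν, ∫ ω in A, X (s, ω) ∂μ = c) :
    ∫ ω in A, ∫ s, w s * X (s, ω) ∂ν ∂μ = (∫ s, w s ∂ν) * c := by
  have hFA : Integrable (fun p : Ω × α => w p.2 * X (p.2, p.1)) ((μ.restrict A).prod ν) := by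
    rw [← Measure.restrict_univ (μ := ν), Measure.prod_restrict]
    exact hF.swap.integrableOn
  rw [integral_integral_swap hFA, ← integral_mul_const]
  refine integral_congr_ae ?_
  filter_upwards [hc] with s hs
  rw [integral_const_mul, hs]

end Product

theorem setIntegral_eq_of_condExp_ae_eq {Ω E : Type*} [NormedAddCommGroup E] [NormedSpace ℝ E]
    [CompleteSpace E] {m m0 : MeasurableSpace Ω} {μ : Measure Ω} (hm : m ≤ m0)
    [SigmaFinite (μ.trim hm)] {f g : Ω → E} (hf : Integrable f μ) (hfg : μ[f | m] =ᵐ[μ] g)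
    {A : Set Ω} (hA : MeasurableSet[m] A) :
    ∫ ω in A, g ω ∂μ = ∫ ω in A, f ω ∂μ := by
  rw [← setIntegral_condExp hm hf hA]
  exact setIntegral_congr_ae (hm A hA) (hfg.mono fun ω h _ => h.symm)

theorem exp_mul_martingale_ae_eq_condExp {Ω : Type*} [m0 : MeasurableSpace Ω] {μ : Measure Ω}
    [IsFiniteMeasure μ] {t S : ℝ} (htS : t ≤ S) {𝒢 : ℝ → MeasurableSpace Ω}
    (hmono : Monotone 𝒢) (hle : ∀ s, 𝒢 s ≤ m0) {M : ℝ × Ω → ℝ} (hM : Measurable M)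
    (hadapted : StronglyMeasurable[𝒢 t] fun ω => M (t, ω))
    (hint : ∀ s ∈ Icc t S, Integrable (fun ω => M (s, ω)) μ)
    (hmart : ∀ s ∈ Icc t S, μ[fun ω => M (S, ω) | 𝒢 s] =ᵐ[μ] fun ω => M (s, ω))
    {β : ℝ → ℝ} (hβ : IntegrableOn β (Icc t S)) :
    (fun ω => Real.exp (∫ u in Icc t S, β u) * M (t, ω)) =ᵐ[μ]
      μ[fun ω => M (S, ω) + ∫ s in Icc t S, β s * Real.exp (∫ u in Icc s S, β u) * M (s, ω)
        | 𝒢 t] := by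
  set w : ℝ → ℝ := fun s => β s * Real.exp (∫ u in Icc s S, β u)
  have hMS : Integrable (fun ω => M (S, ω)) μ := hint S ⟨htS, le_rfl⟩
  have hL1 : ∀ s ∈ Icc t S, ∫ ω, ‖M (s, ω)‖ ∂μ ≤ ∫ ω, ‖M (S, ω)‖ ∂μ := fun s hs =>
    (integral_congr_ae ((hmart s hs).fun_comp norm)).symm.trans_le (integral_norm_condExp_le _)
  have hF : Integrable (fun p => w p.1 * M p) ((volume.restrict (Icc t S)).prod μ) :=
    integrable_prod_mul_of_integral_norm_le (integrableOn_mul_exp_setIntegral_Icc hβ htS)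
      hM.aestronglyMeasurable (ae_restrict_of_forall_mem measurableSet_Icc hint)
      (ae_restrict_of_forall_mem measurableSet_Icc hL1)
  have hconst : ∀ A, MeasurableSet[𝒢 t] A → ∀ s ∈ Icc t S,
      ∫ ω in A, M (s, ω) ∂μ = ∫ ω in A, M (S, ω) ∂μ := fun A hA s hs =>
    setIntegral_eq_of_condExp_ae_eq (hle s) hMS (hmart s hs) (hmono hs.1 A hA)
  have hFint : Integrable (fun ω => ∫ s in Icc t S, w s * M (s, ω)) μ :=
    hF.swap.integral_prod_left
  refine ae_eq_condExp_of_forall_setIntegral_eq (hle t) (hMS.add hFint)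
    (fun A _ _ => ((hint t ⟨le_rfl, htS⟩).const_mul _).integrableOn) (fun A hA _ => ?_)
    (stronglyMeasurable_const.mul hadapted).aestronglyMeasurable
  rw [integral_add hMS.integrableOn hFint.integrableOn,
    setIntegral_integral_mul_of_setIntegral_eq hF
      (ae_restrict_of_forall_mem measurableSet_Icc (hconst A hA)),
    setIntegral_Icc_mul_exp_setIntegral_Icc hβ htS, integral_const_mul,
    hconst A hA t ⟨le_rfl, htS⟩]
  ring

theorem exp_scaled_martingale_solves_bsde_general {Ω : Type*} [m0 : MeasurableSpace Ω]
    (μ : Measure Ω) [IsProbabilityMeasure μ]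
    (t₀ S : ℝ)
    (𝒢 : ℝ → MeasurableSpace Ω) (hmono : Monotone 𝒢) (hle : ∀ t, 𝒢 t ≤ m0)
    (M : ℝ × Ω → ℝ) (hM : Measurable M)
    (hadapted : ∀ t ∈ Set.Icc t₀ S, StronglyMeasurable[𝒢 t] fun ω => M (t, ω))
    (hint : ∀ t ∈ Set.Icc t₀ S, Integrable (fun ω => M (t, ω)) μ)
    (hmart : ∀ t s : ℝ, t₀ ≤ t → t ≤ s → s ≤ S →
      μ[fun ω => M (s, ω) | 𝒢 t] =ᵐ[μ] fun ω => M (t, ω))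
    (β : ℝ → ℝ) (hβ : IntegrableOn β (Set.Icc t₀ S))
    (q : ℝ × Ω → ℝ)
    (hq : ∀ t ω, q (t, ω) = Real.exp (∫ s in Set.Icc t S, β s) * M (t, ω)) :
    ∀ t ∈ Set.Icc t₀ S,
      (fun ω => q (t, ω)) =ᵐ[μ]
        μ[fun ω => M (S, ω) + ∫ s in Set.Icc t S, β s * q (s, ω) | 𝒢 t] := by
  intro t ⟨ht₀, htS⟩
  simp only [hq, ← mul_assoc]
  exact exp_mul_martingale_ae_eq_condExp htS hmono hle hM (hadapted t ⟨ht₀, htS⟩)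
    (fun s hs => hint s ⟨ht₀.trans hs.1, hs.2⟩) (fun s hs => hmart s S (ht₀.trans hs.1) hs.2 le_rfl)
    (hβ.mono_set (Icc_subset_Icc_left ht₀))

/-- Conditional-expectation form of the solution of the backward equation on
the terminal interval: if `M` is a martingale and
`q(t) = exp(∫_t^S β) · M(t)`, then `q(t) = E[M(S) + ∫_t^S β(s) q(s) ds | 𝒢_t]`. -/
theorem exp_scaled_martingale_solves_bsde {Ω : Type*} [m0 : MeasurableSpace Ω]
    (μ : Measure Ω) [IsProbabilityMeasure μ]
    (t₀ S : ℝ) (ht : t₀ ≤ S)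
    (𝒢 : ℝ → MeasurableSpace Ω) (hmono : Monotone 𝒢) (hle : ∀ t, 𝒢 t ≤ m0)
    (M : ℝ × Ω → ℝ) (hM : Measurable M)
    (hadapted : ∀ t ∈ Set.Icc t₀ S, StronglyMeasurable[𝒢 t] fun ω => M (t, ω))
    (hint : ∀ t ∈ Set.Icc t₀ S, Integrable (fun ω => M (t, ω)) μ)
    (hmart : ∀ t s : ℝ, t₀ ≤ t → t ≤ s → s ≤ S →
      μ[fun ω => M (s, ω) | 𝒢 t] =ᵐ[μ] fun ω => M (t, ω))
    (hMi : ∫⁻ s in Set.Icc t₀ S, ∫⁻ ω, (‖M (s, ω)‖₊ : ℝ≥0∞) ∂μ < ⊤)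
    (β : ℝ → ℝ) (hβ : IntegrableOn β (Set.Icc t₀ S))
    (q : ℝ × Ω → ℝ)
    (hq : ∀ t ω, q (t, ω) = Real.exp (∫ s in Set.Icc t S, β s) * M (t, ω)) :
    ∀ t ∈ Set.Icc t₀ S,
      (fun ω => q (t, ω)) =ᵐ[μ]
        μ[fun ω => M (S, ω) + ∫ s in Set.Icc t S, β s * q (s, ω) | 𝒢 t] :=
  exp_scaled_martingale_solves_bsde_general (m0 := m0) μ t₀ S 𝒢 hmono hle M hM hadapted hint hmart β
    hβ q hq
end
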